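/- Let K/k be an extension of H-graded fields and P_{K/k} the set of graded valuation rings O of K with k ⊆ O and graded fraction field K. Endow P_{K/k} with the constructible topology, generated by the sets P{F}∖{G} = {O : F ⊆ O and G ∩ O = ∅} for finite subsets F, G of K^× (the homogeneous units). Then for arbitrary (possibly infinite) subsets F, G ⊆ K^×, the subset {O ∈ P_{K/k} : F ⊆ O, G ∩ O = ∅} is compact and Hausdorff in the constructible topology. -/

import Mathlib

open scoped DirectSum

/-- An `H`-graded field: a nonzero commutative ring with an internal grading by the
commutative group `H` in which every nonzero homogeneous element is invertible
(with homogeneous inverse). -/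
structure GradedField (H : Type*) [CommGroup H] [DecidableEq H] (K : Type*) [CommRing K] where
  comp : H → AddSubgroup K
  one_mem : (1 : K) ∈ comp 1
  mul_mem : ∀ {g h : H} {x y : K}, x ∈ comp g → y ∈ comp h → x * y ∈ comp (g * h)
  isInternal : DirectSum.IsInternal fun h : H => comp h
  zero_ne_one : (0 : K) ≠ 1
  inv_mem : ∀ {h : H} {x : K}, x ∈ comp h → x ≠ 0 → ∃ y ∈ comp h⁻¹, x * y = 1

namespace GradedField

variable {H : Type*} [CommGroup H] [DecidableEq H] {K : Type*} [CommRing K] (F : GradedField H K)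

/-- A homogeneous element. -/
def Homogeneous (x : K) : Prop := ∃ h, x ∈ F.comp h

/-- A subring is graded if each of its elements is a sum of homogeneous elements of the
subring. -/
def IsGradedSubring (R : Subring K) : Prop :=
  ∀ x ∈ R, x ∈ AddSubgroup.closure {y : K | y ∈ R ∧ F.Homogeneous y}

/-- A graded subfield: a graded subring closed under inverses of nonzero homogeneous
elements. -/
structure IsGradedSubfield (L : Subring K) : Prop where
  graded : F.IsGradedSubring L
  inv_mem : ∀ x ∈ L, F.Homogeneous x → x ≠ 0 → Ring.inverse x ∈ L

/-- A graded valuation ring of the graded subfield `L`: a graded subring `R ⊆ L` such that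
every nonzero homogeneous element of `L` lies in `R` or has its inverse in `R`. -/
def IsGradedValRing (L R : Subring K) : Prop :=
  R ≤ L ∧ F.IsGradedSubring R ∧
    ∀ x ∈ L, F.Homogeneous x → x ≠ 0 → (x ∈ R ∨ Ring.inverse x ∈ R)

/-- The identity component `K₁`, as a subring. -/
def oneComponent : Subring K where
  carrier := F.comp 1
  one_mem' := F.one_mem
  mul_mem' := fun ha hb => by simpa using F.mul_mem ha hb
  add_mem' := fun ha hb => (F.comp 1).add_mem ha hb
  zero_mem' := (F.comp 1).zero_mem
  neg_mem' := fun ha => (F.comp 1).neg_mem ha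

theorem mem_oneComponent {x : K} : x ∈ F.oneComponent ↔ x ∈ F.comp 1 := Iff.rfl

/-- The value group `ρ(L^×) ⊆ H` of a graded subfield `L`. -/
def valueGroup (L : Subring K)
    (hL : ∀ x ∈ L, F.Homogeneous x → x ≠ 0 → Ring.inverse x ∈ L) : Subgroup H where
  carrier := {h | ∃ x ∈ F.comp h, x ≠ 0 ∧ x ∈ L}
  one_mem' := ⟨1, F.one_mem, Ne.symm F.zero_ne_one, L.one_mem⟩
  mul_mem' := by
    rintro g h ⟨x, hx, hx0, hxL⟩ ⟨y, hy, hy0, hyL⟩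
    obtain ⟨x', hx', hxx'⟩ := F.inv_mem hx hx0
    obtain ⟨y', hy', hyy'⟩ := F.inv_mem hy hy0
    refine ⟨x * y, F.mul_mem hx hy, ?_, L.mul_mem hxL hyL⟩
    intro h0
    have h1 : x * y * (x' * y') = 1 := by rw [mul_mul_mul_comm, hxx', hyy', one_mul]
    rw [h0, zero_mul] at h1
    exact F.zero_ne_one h1
  inv_mem' := by
    rintro g ⟨x, hx, hx0, hxL⟩
    obtain ⟨y, hy, hxy⟩ := F.inv_mem hx hx0
    have hu : IsUnit x := IsUnit.of_mul_eq_one y hxy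
    have hyx : Ring.inverse x = y := by
      calc Ring.inverse x = Ring.inverse x * (x * y) := by rw [hxy, mul_one]
        _ = Ring.inverse x * x * y := by ring
        _ = y := by rw [Ring.inverse_mul_cancel x hu, one_mul]
    refine ⟨y, hy, ?_, ?_⟩
    · intro h0; rw [h0, mul_zero] at hxy; exact F.zero_ne_one hxy
    · rw [← hyx]; exact hL x hxL ⟨g, hx⟩ hx0

/-- The value group `ρ(K^×)` of the whole graded field. -/
def fullValueGroup : Subgroup H :=
  F.valueGroup ⊤ (fun _ _ _ _ => Subring.mem_top _)

/-- `K₁` as a module over `L₁ = K₁ ∩ L`. -/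
def oneSubmodule (L : Subring K) : Submodule ↥(F.oneComponent ⊓ L) K where
  carrier := F.comp 1
  add_mem' := fun ha hb => (F.comp 1).add_mem ha hb
  zero_mem' := (F.comp 1).zero_mem
  smul_mem' := fun c x hx => by
    have hc : (c : K) ∈ F.comp 1 := ((Subring.mem_inf).mp c.2).1
    have := F.mul_mem hc hx
    simpa [Subring.smul_def] using this

/-- A graded automorphism: a ring automorphism preserving each graded component. -/
def IsGradedAut (σ : RingAut K) : Prop := ∀ (h : H) (x : K), x ∈ F.comp h → σ x ∈ F.comp h

end GradedField

/-- The fixed subring `K^G` of a group of ring automorphisms. -/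
def fixedSubring {K : Type*} [CommRing K] (G : Subgroup (RingAut K)) : Subring K where
  carrier := {x | ∀ σ ∈ G, σ x = x}
  one_mem' := fun σ _ => map_one σ
  mul_mem' := fun ha hb σ hσ => by rw [map_mul, ha σ hσ, hb σ hσ]
  add_mem' := fun ha hb σ hσ => by rw [map_add, ha σ hσ, hb σ hσ]
  zero_mem' := fun σ _ => map_zero σ
  neg_mem' := fun ha σ hσ => by rw [map_neg, ha σ hσ]

theorem mem_fixedSubring {K : Type*} [CommRing K] {G : Subgroup (RingAut K)} {x : K} :
    x ∈ fixedSubring G ↔ ∀ σ ∈ G, σ x = x := Iff.rfl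


namespace GradedField

variable {H : Type*} [CommGroup H] [DecidableEq H] {K : Type*} [CommRing K]
variable (F : GradedField H K)

/-- Decomposition of an element into its homogeneous components. -/
noncomputable def decompose (x : K) : ⨁ h : H, ↥(F.comp h) :=
  (Equiv.ofBijective _ F.isInternal).symm x

/-- The degree-`h` homogeneous component of `x`. -/
noncomputable def component (h : H) (x : K) : K := (F.decompose x h : K)

/-- The inertia subgroup of `G`: graded automorphisms in `G` acting trivially on `K₁`. -/
def inertia (G : Subgroup (RingAut K)) : Subgroup (RingAut K) where
  carrier := {σ | σ ∈ G ∧ ∀ x ∈ F.comp 1, σ x = x}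
  one_mem' := ⟨G.one_mem, fun _ _ => rfl⟩
  mul_mem' := fun {a b} ha hb => ⟨G.mul_mem ha.1 hb.1, fun x hx => by
    show a (b x) = x
    rw [hb.2 x hx, ha.2 x hx]⟩
  inv_mem' := fun {a} ha => ⟨G.inv_mem ha.1, fun x hx => by
    conv_lhs => rw [← ha.2 x hx]
    exact a.symm_apply_apply x⟩

theorem mem_inertia {G : Subgroup (RingAut K)} {σ : RingAut K} :
    σ ∈ F.inertia G ↔ σ ∈ G ∧ ∀ x ∈ F.comp 1, σ x = x := Iff.rfl

end GradedField

/-- A subring `S` containing a subring `L`, viewed as an `L`-submodule of the ambient ring. -/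
def Subring.toSubmoduleOver {K : Type*} [CommRing K] (L S : Subring K) (hLS : L ≤ S) :
    Submodule ↥L K where
  carrier := S
  add_mem' := fun ha hb => S.add_mem ha hb
  zero_mem' := S.zero_mem
  smul_mem' := fun c x hx => S.mul_mem (hLS c.2) hx

section ZR

variable {H : Type*} [CommGroup H] [DecidableEq H] {K : Type*} [CommRing K]

/-- The Zariski–Riemann space of graded valuation rings of `K` containing `k₀`. -/
def GradedField.ZR (F : GradedField H K) (k₀ : Subring K) : Type _ :=
  {O : Subring K // F.IsGradedValRing ⊤ O ∧ k₀ ≤ O}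

/-- The set of homogeneous units (nonzero homogeneous elements) of `K`. -/
def GradedField.HomogUnits (F : GradedField H K) : Type _ :=
  {x : K // x ≠ 0 ∧ F.Homogeneous x}

open Classical in
/-- The embedding of the Zariski–Riemann space into `{0,1}^{K^×}` via characteristic
functions. -/
noncomputable def GradedField.chi (F : GradedField H K) (k₀ : Subring K) (O : F.ZR k₀) :
    F.HomogUnits → Bool :=
  fun x => decide (x.1 ∈ O.1)

/-- Basic open sets `P{F}∖{G}` of the constructible topology, for finite sets `F`, `G` of
homogeneous units. -/
def GradedField.constructibleBasis (F : GradedField H K) (k₀ : Subring K) :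
    Set (Set (F.ZR k₀)) :=
  {s | ∃ Fs Gs : Finset K, (∀ a ∈ Fs, a ≠ 0 ∧ F.Homogeneous a) ∧
    (∀ b ∈ Gs, b ≠ 0 ∧ F.Homogeneous b) ∧
    s = {O : F.ZR k₀ | (∀ a ∈ Fs, a ∈ O.1) ∧ ∀ b ∈ Gs, b ∉ O.1}}

/-- The constructible topology on the Zariski–Riemann space. -/
def GradedField.constructibleTop (F : GradedField H K) (k₀ : Subring K) :
    TopologicalSpace (F.ZR k₀) :=
  TopologicalSpace.generateFrom (F.constructibleBasis k₀)


/-!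
Sending `O` to the indicator function of `O ∩ K^×` embeds `P_{K/k}` into the compact Hausdorff
space `{0,1}^{K^×}`; it is injective because a graded ring is additively generated by its
homogeneous elements, and the sets `{O | x ∈ O}` are clopen by definition of the constructible
topology. The image consists of the `φ` satisfying finitary conditions (`k^× ⊆ φ`, closure under
products, a homogeneous unit that is a finite sum of elements of `φ` lies in `φ`, `x ∈ φ` or
`x⁻¹ ∈ φ`), so it is closed: for such `φ` the additive span of `φ` is a graded valuation ring
meeting `K^×` exactly in `φ`. Hence `P_{K/k}` is compact Hausdorff, and the given subset is an
intersection of clopen sets.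
-/

open Topology

theorem Ring.inverse_eq_of_mul_eq_one {M : Type*} [CommMonoidWithZero M] {x y : M}
    (h : x * y = 1) : Ring.inverse x = y := by
  simpa [h] using Ring.inverse_mul_cancel_left x y (.of_mul_eq_one y h)

/-- The additive closure of `M`, closed under negation because `-x = (-1) * x`. -/
def Submonoid.subringClosureOfNegOneMem {R : Type*} [Ring R] (M : Submonoid R)
    (hM : (-1 : R) ∈ M) : Subring R :=
  { M.subsemiringClosure with
    neg_mem' := fun {x} hx => by
      simpa using M.subsemiringClosure.mul_mem (AddSubmonoid.subset_closure hM) hx }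

attribute [local instance] GradedField.constructibleTop

namespace GradedField

variable {F : GradedField H K}

theorem homogeneous_one (F : GradedField H K) : F.Homogeneous 1 := ⟨1, F.one_mem⟩

theorem Homogeneous.mul {x y : K} (hx : F.Homogeneous x) (hy : F.Homogeneous y) :
    F.Homogeneous (x * y) :=
  let ⟨_, hg⟩ := hx; let ⟨_, hh⟩ := hy; ⟨_, F.mul_mem hg hh⟩

theorem Homogeneous.neg {x : K} (hx : F.Homogeneous x) : F.Homogeneous (-x) :=
  let ⟨g, hg⟩ := hx; ⟨g, (F.comp g).neg_mem hg⟩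

theorem Homogeneous.isUnit {x : K} (hx : F.Homogeneous x) (h0 : x ≠ 0) : IsUnit x :=
  let ⟨_, hg⟩ := hx; let ⟨y, _, hxy⟩ := F.inv_mem hg h0; .of_mul_eq_one y hxy

theorem nontrivial (F : GradedField H K) : Nontrivial K := ⟨⟨0, 1, F.zero_ne_one⟩⟩

theorem IsGradedSubring.le_of_forall_mem {R S : Subring K} (hR : F.IsGradedSubring R)
    (h : ∀ x ∈ R, F.Homogeneous x → x ≠ 0 → x ∈ S) : R ≤ S := by
  intro x hx
  refine (AddSubgroup.closure_le S.toAddSubgroup).2 ?_ (hR x hx)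
  rintro y ⟨hyR, hy⟩
  by_cases hy0 : y = 0
  · exact hy0 ▸ S.zero_mem
  · exact h y hyR hy hy0

variable (F)

def trueSet (φ : F.HomogUnits → Bool) : Set K :=
  {z | ∃ h : z ≠ 0 ∧ F.Homogeneous z, φ ⟨z, h⟩}

structure IsValRingIndicator (k₀ : Subring K) (φ : F.HomogUnits → Bool) : Prop where
  base_mem : ∀ x : F.HomogUnits, x.1 ∈ k₀ → φ x
  mul_mem : ∀ x y z : F.HomogUnits, z.1 = x.1 * y.1 → φ x → φ y → φ z
  sum_mem : ∀ (l : List K) (y : F.HomogUnits), y.1 = l.sum → (∀ z ∈ l, z ∈ F.trueSet φ) → φ y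
  mem_or_inv_mem : ∀ x y : F.HomogUnits, x.1 * y.1 = 1 → φ x ∨ φ y

theorem isValRingIndicator_iff (k₀ : Subring K) (φ : F.HomogUnits → Bool) :
    F.IsValRingIndicator k₀ φ ↔
      (∀ x : F.HomogUnits, x.1 ∈ k₀ → φ x) ∧
      (∀ x y z : F.HomogUnits, z.1 = x.1 * y.1 → φ x → φ y → φ z) ∧
      (∀ (l : List K) (y : F.HomogUnits), y.1 = l.sum → (∀ z ∈ l, z ∈ F.trueSet φ) → φ y) ∧
      (∀ x y : F.HomogUnits, x.1 * y.1 = 1 → φ x ∨ φ y) :=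
  ⟨fun ⟨h₁, h₂, h₃, h₄⟩ => ⟨h₁, h₂, h₃, h₄⟩, fun ⟨h₁, h₂, h₃, h₄⟩ => ⟨h₁, h₂, h₃, h₄⟩⟩

theorem isClosed_setOf_isValRingIndicator (k₀ : Subring K) :
    IsClosed {φ | F.IsValRingIndicator k₀ φ} := by
  have hclopen (x : F.HomogUnits) : IsClopen {φ : F.HomogUnits → Bool | φ x} :=
    (isClopen_discrete {true}).preimage (continuous_apply x)
  have hopen (l : List K) : IsOpen {φ | ∀ z ∈ l, z ∈ F.trueSet φ} := by
    simp only [trueSet, Set.mem_ofPred_eq, Set.ofPred_forall, Set.ofPred_exists]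
    exact l.finite_toSet.isOpen_biInter fun z _ => isOpen_iUnion fun h => (hclopen ⟨z, h⟩).isOpen
  simp only [isValRingIndicator_iff, Set.ofPred_and, Set.ofPred_forall]
  refine .inter ?_ (.inter ?_ (.inter ?_ ?_))
  · exact isClosed_iInter fun x => isClosed_iInter fun _ => (hclopen x).isClosed
  · exact isClosed_iInter fun x => isClosed_iInter fun y => isClosed_iInter fun z =>
      isClosed_iInter fun _ => isClosed_imp (hclopen x).isOpen <|
        isClosed_imp (hclopen y).isOpen (hclopen z).isClosed
  · exact isClosed_iInter fun l => isClosed_iInter fun y =>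
      isClosed_iInter fun _ => isClosed_imp (hopen l) (hclopen y).isClosed
  · exact isClosed_iInter fun x => isClosed_iInter fun y =>
      isClosed_iInter fun _ => ((hclopen x).isClosed.union (hclopen y).isClosed)

variable {F} {k₀ : Subring K}

@[simp]
theorem chi_apply_eq_true {O : F.ZR k₀} {x : F.HomogUnits} : F.chi k₀ O x = true ↔ x.1 ∈ O.1 := by
  simp [chi]

theorem isValRingIndicator_chi (O : F.ZR k₀) : F.IsValRingIndicator k₀ (F.chi k₀ O) where
  base_mem x hx := chi_apply_eq_true.2 (O.2.2 hx)
  mul_mem x y z hz hx hy :=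
    chi_apply_eq_true.2 (hz ▸ O.1.mul_mem (chi_apply_eq_true.1 hx) (chi_apply_eq_true.1 hy))
  sum_mem l y hy hl :=
    chi_apply_eq_true.2 (hy ▸ list_sum_mem fun z hz => chi_apply_eq_true.1 (hl z hz).2)
  mem_or_inv_mem x y hxy := by
    simpa only [chi_apply_eq_true, Ring.inverse_eq_of_mul_eq_one hxy] using
      O.2.1.2.2 x.1 (Subring.mem_top _) x.2.2 x.2.1

theorem chi_injective : Function.Injective (F.chi k₀) := by
  have hle {O₁ O₂ : F.ZR k₀} (h : F.chi k₀ O₁ = F.chi k₀ O₂) : O₁.1 ≤ O₂.1 :=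
    O₁.2.1.2.1.le_of_forall_mem fun x hx hxh hx0 =>
      chi_apply_eq_true.1 (congrFun h ⟨x, hx0, hxh⟩ ▸ chi_apply_eq_true.2 hx)
  exact fun O₁ O₂ h => Subtype.ext (le_antisymm (hle h) (hle h.symm))

namespace IsValRingIndicator

variable {φ : F.HomogUnits → Bool} (hφ : F.IsValRingIndicator k₀ φ)
include hφ

theorem one_mem_trueSet : (1 : K) ∈ F.trueSet φ :=
  have := F.nontrivial
  ⟨_, hφ.base_mem ⟨1, one_ne_zero, F.homogeneous_one⟩ k₀.one_mem⟩

theorem neg_one_mem_trueSet : (-1 : K) ∈ F.trueSet φ :=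
  have := F.nontrivial
  ⟨_, hφ.base_mem ⟨-1, neg_ne_zero.2 one_ne_zero, F.homogeneous_one.neg⟩ (k₀.neg_mem k₀.one_mem)⟩

theorem mul_mem_trueSet {x y : K} (hx : x ∈ F.trueSet φ) (hy : y ∈ F.trueSet φ) :
    x * y ∈ F.trueSet φ := by
  obtain ⟨hx', hφx⟩ := hx
  obtain ⟨hy', hφy⟩ := hy
  have := F.nontrivial
  have hxy : x * y ≠ 0 ∧ F.Homogeneous (x * y) :=
    ⟨((hx'.2.isUnit hx'.1).mul (hy'.2.isUnit hy'.1)).ne_zero, hx'.2.mul hy'.2⟩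
  exact ⟨hxy, hφ.mul_mem ⟨x, hx'⟩ ⟨y, hy'⟩ ⟨_, hxy⟩ rfl hφx hφy⟩

def trueSubmonoid : Submonoid K where
  carrier := F.trueSet φ
  one_mem' := hφ.one_mem_trueSet
  mul_mem' := hφ.mul_mem_trueSet

def valRing : Subring K :=
  hφ.trueSubmonoid.subringClosureOfNegOneMem hφ.neg_one_mem_trueSet

theorem mem_valRing_iff (x : F.HomogUnits) : x.1 ∈ hφ.valRing ↔ φ x := by
  refine ⟨fun hx => ?_, fun hx => AddSubmonoid.subset_closure ⟨x.2, hx⟩⟩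
  obtain ⟨l, hl, hsum⟩ := AddSubmonoid.exists_list_of_mem_closure hx
  exact hφ.sum_mem l x hsum.symm hl

theorem isGradedValRing_valRing : F.IsGradedValRing ⊤ hφ.valRing := by
  refine ⟨le_top, fun x hx => ?_, fun x _ hx hx0 => ?_⟩
  · refine (AddSubmonoid.closure_le (S := (AddSubgroup.closure _).toAddSubmonoid)).2 ?_ hx
    exact fun y hy => AddSubgroup.subset_closure ⟨AddSubmonoid.subset_closure hy, hy.1.2⟩
  · obtain ⟨h, hxh⟩ := hx
    obtain ⟨y, hyh, hxy⟩ := F.inv_mem hxh hx0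
    have := F.nontrivial
    have hy0 : y ≠ 0 := right_ne_zero_of_mul_eq_one hxy
    rw [Ring.inverse_eq_of_mul_eq_one hxy]
    exact (hφ.mem_or_inv_mem ⟨x, hx0, h, hxh⟩ ⟨y, hy0, h⁻¹, hyh⟩ hxy).imp
      (hφ.mem_valRing_iff _).2 (hφ.mem_valRing_iff _).2

theorem le_valRing (hk₀ : F.IsGradedSubring k₀) : k₀ ≤ hφ.valRing :=
  hk₀.le_of_forall_mem fun x hx hxh hx0 =>
    (hφ.mem_valRing_iff ⟨x, hx0, hxh⟩).2 (hφ.base_mem _ hx)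

theorem chi_valRing (hk₀ : F.IsGradedSubring k₀) :
    F.chi k₀ ⟨hφ.valRing, hφ.isGradedValRing_valRing, hφ.le_valRing hk₀⟩ = φ :=
  funext fun x => Bool.eq_iff_iff.2 (chi_apply_eq_true.trans (hφ.mem_valRing_iff x))

end IsValRingIndicator

theorem range_chi (hk₀ : F.IsGradedSubring k₀) :
    Set.range (F.chi k₀) = {φ | F.IsValRingIndicator k₀ φ} :=
  Set.Subset.antisymm (Set.range_subset_iff.2 isValRingIndicator_chi)
    fun _ hφ => ⟨_, hφ.chi_valRing hk₀⟩

theorem isOpen_setOf_mem (x : F.HomogUnits) : IsOpen {O : F.ZR k₀ | x.1 ∈ O.1} :=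
  TopologicalSpace.isOpen_generateFrom_of_mem
    ⟨{x.1}, ∅, by simpa using x.2, by simp, by ext; simp⟩

theorem isOpen_setOf_notMem (x : F.HomogUnits) : IsOpen {O : F.ZR k₀ | x.1 ∉ O.1} :=
  TopologicalSpace.isOpen_generateFrom_of_mem
    ⟨∅, {x.1}, by simp, by simpa using x.2, by ext; simp⟩

theorem isClopen_setOf_mem (x : F.HomogUnits) : IsClopen {O : F.ZR k₀ | x.1 ∈ O.1} :=
  ⟨isOpen_compl_iff.1 (isOpen_setOf_notMem x), isOpen_setOf_mem x⟩

theorem continuous_chi : Continuous (F.chi k₀) :=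
  continuous_pi fun x =>
    ((continuous_boolIndicator_iff_isClopen _).2 (isClopen_setOf_mem x)).congr
      fun O => (Bool.eq_iff_iff.2 <| chi_apply_eq_true.trans <|
        Set.mem_iff_boolIndicator {O : F.ZR k₀ | x.1 ∈ O.1} O).symm

theorem isInducing_chi : IsInducing (F.chi k₀) := by
  refine ⟨le_antisymm continuous_chi.le_induced (le_generateFrom ?_)⟩
  rintro _ ⟨Fs, Gs, hFs, hGs, rfl⟩
  have hfin (s : Finset K) : {x : F.HomogUnits | x.1 ∈ s}.Finite :=
    s.finite_toSet.preimage Subtype.val_injective.injOn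
  refine isOpen_induced_iff.2 ⟨_, (isOpen_set_pi (hfin Fs) fun _ _ => isOpen_discrete {true}).inter
    (isOpen_set_pi (hfin Gs) fun _ _ => isOpen_discrete {false}), ?_⟩
  ext O
  simp only [Set.mem_preimage, Set.mem_inter_iff, Set.mem_pi, Set.mem_singleton_iff,
    Set.mem_ofPred_eq, chi_apply_eq_true, ← Bool.not_eq_true]
  exact ⟨fun h => ⟨fun a ha => h.1 ⟨a, hFs a ha⟩ ha, fun b hb => h.2 ⟨b, hGs b hb⟩ hb⟩,
    fun h => ⟨fun x => h.1 x.1, fun x => h.2 x.1⟩⟩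

theorem isClosedEmbedding_chi (hk₀ : F.IsGradedSubring k₀) : IsClosedEmbedding (F.chi k₀) :=
  ⟨⟨isInducing_chi, chi_injective⟩, range_chi hk₀ ▸ F.isClosed_setOf_isValRingIndicator k₀⟩

theorem isClosed_setOf_forall_mem_and_forall_notMem {Fs Gs : Set K}
    (hFs : ∀ a ∈ Fs, a ≠ 0 ∧ F.Homogeneous a) (hGs : ∀ b ∈ Gs, b ≠ 0 ∧ F.Homogeneous b) :
    IsClosed {O : F.ZR k₀ | (∀ a ∈ Fs, a ∈ O.1) ∧ ∀ b ∈ Gs, b ∉ O.1} := by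
  simp only [Set.ofPred_and, Set.ofPred_forall]
  exact (isClosed_iInter fun a => isClosed_iInter fun ha =>
      (isClopen_setOf_mem ⟨a, hFs a ha⟩).isClosed).inter
    (isClosed_iInter fun b => isClosed_iInter fun hb =>
      (isClopen_setOf_mem ⟨b, hGs b hb⟩).compl.isClosed)

end GradedField

/-- Let `K/k₀` be an extension of `H`-graded fields and `P_{K/k₀}` the Zariski–Riemann space
of graded valuation rings of `K` containing `k₀`, with the constructible topology.  Then for
arbitrary subsets `Fs`, `Gs` of the homogeneous units of `K`, the subset
`{O : Fs ⊆ O, Gs ∩ O = ∅}` is compact and Hausdorff. -/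
theorem GradedField.isCompact_t2_constructible {H : Type*} [CommGroup H] [DecidableEq H]
    {K : Type*} [CommRing K] (F : GradedField H K) (k₀ : Subring K)
    (hk₀ : F.IsGradedSubfield k₀) (Fs Gs : Set K)
    (hFs : ∀ a ∈ Fs, a ≠ 0 ∧ F.Homogeneous a) (hGs : ∀ b ∈ Gs, b ≠ 0 ∧ F.Homogeneous b) :
    @IsCompact (F.ZR k₀) (F.constructibleTop k₀)
        {O : F.ZR k₀ | (∀ a ∈ Fs, a ∈ O.1) ∧ ∀ b ∈ Gs, b ∉ O.1} ∧
      @T2Space {O : F.ZR k₀ // (∀ a ∈ Fs, a ∈ O.1) ∧ ∀ b ∈ Gs, b ∉ O.1}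
        (TopologicalSpace.induced Subtype.val (F.constructibleTop k₀)) := by
  have hchi := isClosedEmbedding_chi (F := F) hk₀.graded
  have : CompactSpace (F.ZR k₀) := hchi.compactSpace
  have : T2Space (F.ZR k₀) := hchi.isEmbedding.t2Space
  exact ⟨(isClosed_setOf_forall_mem_and_forall_notMem hFs hGs).isCompact, inferInstance⟩
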